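/- Let S be a TCK family for a graph G generating the WOT-closed algebra 𝔖, and let V ⊆ H be a coinvariant subspace (invariant for 𝔖*). Then the closed subspace 𝔖[V] = closure of 𝔖·V is reducing for 𝔖: it is invariant under all S_μ and all S_μ*. -/

import Mathlib

structure DirectedGraph where
  V : Type
  E : Type
  src : E → V
  rng : E → V

namespace DirectedGraph

/-- Two edges are composable (as in `e₂ e₁`, `e₂` after `e₁`) when `s(e₂) = r(e₁)`. -/
def Composable (G : DirectedGraph) (a b : G.E) : Prop := G.src a = G.rng b

/-- A list `[eₙ, …, e₁]` of edges is a path when consecutive edges are composable. -/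
def IsPathList (G : DirectedGraph) (μ : List G.E) : Prop := List.Chain' G.Composable μ

/-- The path `μ` has source `v` (vacuous for the empty path). -/
def SrcIs (G : DirectedGraph) (μ : List G.E) (v : G.V) : Prop :=
  ∀ e ∈ μ.getLast?, G.src e = v

/-- The path `μ`, regarded as a path with source `v`, has range `w`. -/
def RngIs (G : DirectedGraph) (v : G.V) (μ : List G.E) (w : G.V) : Prop :=
  match μ with
  | [] => v = w
  | e :: _ => G.rng e = w

/-- `μ` is a path with source `v`. -/
def IsPathAt (G : DirectedGraph) (v : G.V) (μ : List G.E) : Prop :=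
  G.IsPathList μ ∧ G.SrcIs μ v

/-- `μ` is a cycle at `v` : a path with source and range `v`. -/
def IsCycleAt (G : DirectedGraph) (v : G.V) (μ : List G.E) : Prop :=
  G.IsPathAt v μ ∧ G.RngIs v μ v

end DirectedGraph

/-- A Toeplitz–Cuntz–Krieger family for the directed graph `G` on the Hilbert space `H`:
pairwise orthogonal projections `Sv v`, partial isometries `Se e` with
`(Se e)* (Se e) = Sv (s e)`, and `∑_{e ∈ F} (Se e)(Se e)* ≤ Sv v` for finite `F ⊆ r⁻¹(v)`. -/
structure TCKFamily (G : DirectedGraph) (H : Type) [NormedAddCommGroup H]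
    [InnerProductSpace ℂ H] [CompleteSpace H] where
  Sv : G.V → H →L[ℂ] H
  Se : G.E → H →L[ℂ] H
  sv_sa : ∀ v, IsSelfAdjoint (Sv v)
  sv_idem : ∀ v, Sv v * Sv v = Sv v
  sv_orth : ∀ v w, v ≠ w → Sv v * Sv w = 0
  se_isom : ∀ e, ContinuousLinearMap.adjoint (Se e) * Se e = Sv (G.src e)
  tck_ineq : ∀ (v : G.V) (F : Finset G.E), (∀ e ∈ F, G.rng e = v) →
    ContinuousLinearMap.IsPositive
      (Sv v - ∑ e ∈ F, Se e * ContinuousLinearMap.adjoint (Se e))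

/-- The operator associated to a path `μ` with source `v`: the product of the edge
operators along `μ`, with the convention that the empty path at `v` gives `Sv v`. -/
noncomputable def pathOp {G : DirectedGraph} {H : Type} [NormedAddCommGroup H]
    [InnerProductSpace ℂ H] [CompleteSpace H]
    (S : TCKFamily G H) (v : G.V) (μ : List G.E) : H →L[ℂ] H :=
  match μ with
  | [] => S.Sv v
  | e :: rest => (((e :: rest)).map S.Se).prod

/-- The closed subspace `𝔖[V]` generated by a subspace `V` under the free
semigroupoid algebra: the closure of `V` together with all `S_μ ξ`, `ξ ∈ V`. -/
noncomputable def genSubspace {H : Type} [NormedAddCommGroup H] [InnerProductSpace ℂ H]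
    [CompleteSpace H] {G : DirectedGraph} (S : TCKFamily G H) (Vs : Submodule ℂ H) :
    Submodule ℂ H :=
  (Vs ⊔ Submodule.span ℂ {y : H | ∃ (u : G.V) (ν : List G.E) (ξ : H),
    G.IsPathAt u ν ∧ ξ ∈ Vs ∧ y = pathOp S u ν ξ}).topologicalClosure

/-! The spanning vectors `S_μ ξ` (`ξ ∈ V`) of `𝔖[V]` are sent by `S_v` and `S_e` to `S_μ`,
`S_{eμ}` or `0`, and by `S_e*` to `S_{s(e)} S_ν` or `0`, because the TCK relations force
`S_e* S_f = δ_{e,f} S_{s(e)}`; on `V` itself, `S_v = S_v*` and `S_e*` act by coinvariance.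
Invariance under these generators passes to the closure, and then to all `S_μ`, `S_μ*` by
induction along the path. -/

open ContinuousLinearMap Set

section Operators

variable {𝕜 E : Type*} [RCLike 𝕜] [NormedAddCommGroup E] [InnerProductSpace 𝕜 E]
  [CompleteSpace E]

lemma adjoint_mul_eq_zero_of_isPositive_sub {A T U : E →L[𝕜] E}
    (hpos : (A - T * adjoint T).IsPositive) (hAU : A * U = 0) : adjoint T * U = 0 := by
  ext x
  have hA : A (U x) = 0 := by simpa using DFunLike.congr_fun hAU x
  -- `0 ≤ re ⟪(A - T T*) U x, U x⟫ = -‖T* U x‖²`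
  have h := hpos.re_inner_nonneg_left (U x)
  rw [sub_apply, mul_apply_eq_comp, hA, zero_sub, inner_neg_left, map_neg,
    ← adjoint_inner_right, inner_self_eq_norm_sq, neg_nonneg] at h
  simpa using h

lemma mul_adjoint_mul_self_eq_self {T : E →L[𝕜] E} (h : IsIdempotentElem (adjoint T * T)) :
    T * (adjoint T * T) = T := by
  have hT := adjoint_mul_eq_zero_of_isPositive_sub (A := adjoint T * T) (T := adjoint T)
    (U := 1 - adjoint T * T) (by simp) (by rw [mul_sub, mul_one, h.eq, sub_self])
  rw [adjoint_adjoint, mul_sub, mul_one, sub_eq_zero] at hT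
  exact hT.symm

lemma mul_eq_self_of_isPositive_sub_mul_adjoint {P T : E →L[𝕜] E} (hP : IsStarProjection P)
    (hpos : (P - T * adjoint T).IsPositive) : P * T = T := by
  have h := adjoint_mul_eq_zero_of_isPositive_sub hpos hP.mul_one_sub_self
  have h' : (1 - P) * T = 0 := by
    simpa [← star_eq_adjoint, star_mul, hP.one_sub.isSelfAdjoint.star_eq] using congr(star $h)
  rwa [sub_mul, one_mul, sub_eq_zero, eq_comm] at h'

end Operators

namespace TCKFamily

variable {G : DirectedGraph} {H : Type} [NormedAddCommGroup H] [InnerProductSpace ℂ H]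
  [CompleteSpace H] (S : TCKFamily G H)

lemma isStarProjection_sv (v : G.V) : IsStarProjection (S.Sv v) := ⟨S.sv_idem v, S.sv_sa v⟩

lemma se_mul_sv_src (e : G.E) : S.Se e * S.Sv (G.src e) = S.Se e := by
  rw [← S.se_isom]
  exact mul_adjoint_mul_self_eq_self (S.se_isom e ▸ S.sv_idem _)

lemma sv_rng_mul_se (e : G.E) : S.Sv (G.rng e) * S.Se e = S.Se e :=
  mul_eq_self_of_isPositive_sub_mul_adjoint (S.isStarProjection_sv _)
    (by simpa using S.tck_ineq (G.rng e) {e} (by simp))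

lemma sv_mul_se_of_ne {v : G.V} {e : G.E} (h : v ≠ G.rng e) : S.Sv v * S.Se e = 0 := by
  rw [← S.sv_rng_mul_se e, ← mul_assoc, S.sv_orth _ _ h, zero_mul]

lemma se_mul_se_of_ne {e f : G.E} (h : G.src e ≠ G.rng f) : S.Se e * S.Se f = 0 := by
  rw [← S.se_mul_sv_src e, ← S.sv_rng_mul_se f, mul_assoc, ← mul_assoc (S.Sv _),
    S.sv_orth _ _ h, zero_mul, mul_zero]

lemma adjoint_se_mul_se_of_ne {e f : G.E} (h : e ≠ f) : adjoint (S.Se e) * S.Se f = 0 := by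
  by_cases hr : G.rng e = G.rng f
  · -- `S_e S_e* ≤ S_v - S_f S_f*`, and the right-hand side annihilates the range of `S_f`.
    classical
    apply adjoint_mul_eq_zero_of_isPositive_sub (A := S.Sv (G.rng f) - S.Se f * adjoint (S.Se f))
    · have := S.tck_ineq (G.rng f) {e, f} (by simp [hr])
      rwa [Finset.sum_pair h, sub_add_eq_sub_sub_swap] at this
    · rw [sub_mul, S.sv_rng_mul_se, mul_assoc, S.se_isom, S.se_mul_sv_src, sub_self]
  · rw [← S.sv_rng_mul_se e, ← S.sv_rng_mul_se f, ← star_eq_adjoint, star_mul,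
      (S.sv_sa _).star_eq, mul_assoc, ← mul_assoc (S.Sv _), S.sv_orth _ _ hr, zero_mul, mul_zero]

end TCKFamily

namespace DirectedGraph

variable {G : DirectedGraph} {u : G.V} {e f : G.E} {ν : List G.E}

lemma isPathAt_singleton (e : G.E) : G.IsPathAt (G.src e) [e] :=
  ⟨List.isChain_singleton e, fun _ ha => by cases ha; rfl⟩

lemma IsPathAt.src_eq (h : G.IsPathAt u [e]) : G.src e = u :=
  h.2 e rfl

lemma IsPathAt.tail (h : G.IsPathAt u (f :: ν)) : G.IsPathAt u ν := by
  refine ⟨h.1.tail, ?_⟩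
  cases ν with
  | nil => simp [SrcIs]
  | cons g t => exact fun a ha => h.2 a (by rwa [List.getLast?_cons_cons])

lemma IsPathAt.cons (h : G.IsPathAt u (f :: ν)) (hef : G.src e = G.rng f) :
    G.IsPathAt u (e :: f :: ν) :=
  ⟨List.isChain_cons_cons.mpr ⟨hef, h.1⟩, fun a ha => h.2 a (by rwa [List.getLast?_cons_cons] at ha)⟩

end DirectedGraph

section Paths

variable {G : DirectedGraph} {H : Type} [NormedAddCommGroup H] [InnerProductSpace ℂ H]
  [CompleteSpace H] (S : TCKFamily G H)

lemma pathOp_cons {u : G.V} {f : G.E} {ν : List G.E} (h : G.IsPathAt u (f :: ν)) :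
    pathOp S u (f :: ν) = S.Se f * pathOp S u ν := by
  cases ν with
  | nil =>
    show S.Se f * 1 = S.Se f * S.Sv u
    rw [mul_one, ← h.src_eq, S.se_mul_sv_src]
  | cons g t => rfl

variable (Vs : Submodule ℂ H)

lemma le_genSubspace : Vs ≤ genSubspace S Vs :=
  le_sup_left.trans (Submodule.le_topologicalClosure _)

lemma pathOp_apply_mem_genSubspace {u : G.V} {ν : List G.E} (hp : G.IsPathAt u ν) {ξ : H}
    (hξ : ξ ∈ Vs) : pathOp S u ν ξ ∈ genSubspace S Vs :=
  Submodule.le_topologicalClosure _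
    (Submodule.mem_sup_right (Submodule.subset_span ⟨u, ν, ξ, hp, hξ, rfl⟩))

lemma mapsTo_genSubspace (T : H →L[ℂ] H) (hV : ∀ ξ ∈ Vs, T ξ ∈ genSubspace S Vs)
    (hpath : ∀ (u : G.V) (ν : List G.E) (ξ : H), G.IsPathAt u ν → ξ ∈ Vs →
      T (pathOp S u ν ξ) ∈ genSubspace S Vs) :
    MapsTo T (genSubspace S Vs) (genSubspace S Vs) := by
  have hgen : Vs ⊔ Submodule.span ℂ {y : H | ∃ (u : G.V) (ν : List G.E) (ξ : H),
      G.IsPathAt u ν ∧ ξ ∈ Vs ∧ y = pathOp S u ν ξ} ≤ (genSubspace S Vs).comap (T : H →ₗ[ℂ] H) := by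
    refine sup_le hV (Submodule.span_le.mpr ?_)
    rintro _ ⟨u, ν, ξ, hp, hξ, rfl⟩
    exact hpath u ν ξ hp hξ
  exact Submodule.topologicalClosure_minimal _ hgen
    ((Submodule.isClosed_topologicalClosure _).preimage T.continuous)

variable {S Vs}

lemma mapsTo_sv (hcoV : ∀ u : G.V, MapsTo (adjoint (S.Sv u)) Vs Vs) (u : G.V) :
    MapsTo (S.Sv u) Vs Vs := by
  simpa only [← star_eq_adjoint, (S.sv_sa u).star_eq] using hcoV u

lemma sv_apply_pathOp_mem_genSubspace (hcoV : ∀ u : G.V, MapsTo (adjoint (S.Sv u)) Vs Vs)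
    (v : G.V) {u : G.V} {ν : List G.E} (hp : G.IsPathAt u ν) {ξ : H} (hξ : ξ ∈ Vs) :
    S.Sv v (pathOp S u ν ξ) ∈ genSubspace S Vs := by
  cases ν with
  | nil => exact le_genSubspace S Vs (mapsTo_sv hcoV v (mapsTo_sv hcoV u hξ))
  | cons f ν =>
    rw [pathOp_cons S hp, ← mul_apply_eq_comp, ← mul_assoc]
    by_cases hv : v = G.rng f
    · rw [hv, S.sv_rng_mul_se, ← pathOp_cons S hp]
      exact pathOp_apply_mem_genSubspace S Vs hp hξ
    · rw [S.sv_mul_se_of_ne hv, zero_mul]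
      exact zero_mem _

lemma mapsTo_genSubspace_sv (hcoV : ∀ u : G.V, MapsTo (adjoint (S.Sv u)) Vs Vs) (v : G.V) :
    MapsTo (S.Sv v) (genSubspace S Vs) (genSubspace S Vs) :=
  mapsTo_genSubspace S Vs _ (fun _ hξ => le_genSubspace S Vs (mapsTo_sv hcoV v hξ))
    (fun _ _ _ hp hξ => sv_apply_pathOp_mem_genSubspace hcoV v hp hξ)

lemma mapsTo_genSubspace_se (hcoV : ∀ u : G.V, MapsTo (adjoint (S.Sv u)) Vs Vs) (e : G.E) :
    MapsTo (S.Se e) (genSubspace S Vs) (genSubspace S Vs) := by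
  have hV : ∀ ξ ∈ Vs, S.Se e ξ ∈ genSubspace S Vs := fun ξ hξ => by
    simpa [pathOp] using pathOp_apply_mem_genSubspace S Vs (G.isPathAt_singleton e) hξ
  refine mapsTo_genSubspace S Vs _ hV fun u ν ξ hp hξ => ?_
  cases ν with
  | nil => exact hV _ (mapsTo_sv hcoV u hξ)
  | cons f ν =>
    by_cases hef : G.src e = G.rng f
    · rw [← mul_apply_eq_comp, ← pathOp_cons S (hp.cons hef)]
      exact pathOp_apply_mem_genSubspace S Vs (hp.cons hef) hξ
    · rw [pathOp_cons S hp, ← mul_apply_eq_comp, ← mul_assoc, S.se_mul_se_of_ne hef, zero_mul]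
      exact zero_mem _

lemma mapsTo_genSubspace_adjoint_se (hcoV : ∀ u : G.V, MapsTo (adjoint (S.Sv u)) Vs Vs)
    (hcoE : ∀ e : G.E, MapsTo (adjoint (S.Se e)) Vs Vs) (e : G.E) :
    MapsTo (adjoint (S.Se e)) (genSubspace S Vs) (genSubspace S Vs) := by
  have hV : ∀ ξ ∈ Vs, adjoint (S.Se e) ξ ∈ genSubspace S Vs :=
    fun _ hξ => le_genSubspace S Vs (hcoE e hξ)
  refine mapsTo_genSubspace S Vs _ hV fun u ν ξ hp hξ => ?_
  cases ν with
  | nil => exact hV _ (mapsTo_sv hcoV u hξ)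
  | cons f ν =>
    rw [pathOp_cons S hp, ← mul_apply_eq_comp, ← mul_assoc]
    by_cases hef : e = f
    · rw [hef, S.se_isom]
      exact sv_apply_pathOp_mem_genSubspace hcoV _ hp.tail hξ
    · rw [S.adjoint_se_mul_se_of_ne hef, zero_mul]
      exact zero_mem _

lemma mapsTo_genSubspace_pathOp (hcoV : ∀ u : G.V, MapsTo (adjoint (S.Sv u)) Vs Vs)
    {w : G.V} {μ : List G.E} (hμ : G.IsPathAt w μ) :
    MapsTo (pathOp S w μ) (genSubspace S Vs) (genSubspace S Vs) := by
  induction μ with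
  | nil => exact mapsTo_genSubspace_sv hcoV w
  | cons f μ ih =>
    rw [pathOp_cons S hμ, FunLike.coe_mul_eq_comp]
    exact (mapsTo_genSubspace_se hcoV f).comp (ih hμ.tail)

lemma mapsTo_genSubspace_adjoint_pathOp (hcoV : ∀ u : G.V, MapsTo (adjoint (S.Sv u)) Vs Vs)
    (hcoE : ∀ e : G.E, MapsTo (adjoint (S.Se e)) Vs Vs) {w : G.V} {μ : List G.E}
    (hμ : G.IsPathAt w μ) :
    MapsTo (adjoint (pathOp S w μ)) (genSubspace S Vs) (genSubspace S Vs) := by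
  induction μ with
  | nil =>
    rw [pathOp, ← star_eq_adjoint, (S.sv_sa w).star_eq]
    exact mapsTo_genSubspace_sv hcoV w
  | cons f μ ih =>
    rw [pathOp_cons S hμ, ← star_eq_adjoint, star_mul, FunLike.coe_mul_eq_comp, star_eq_adjoint,
      star_eq_adjoint]
    exact (ih hμ.tail).comp (mapsTo_genSubspace_adjoint_se hcoV hcoE f)

end Paths

/-- If `Vs` is a coinvariant subspace for the free semigroupoid
algebra generated by a TCK family `S` (invariant under all adjoints `S_v*`, `S_e*`),
then `𝔖[Vs]` is reducing: invariant under every `S_μ` and every `S_μ*`. -/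
theorem stmt7 {H : Type} [NormedAddCommGroup H] [InnerProductSpace ℂ H] [CompleteSpace H]
    (G : DirectedGraph) (S : TCKFamily G H) (Vs : Submodule ℂ H)
    (hcoV : ∀ (u : G.V) (x : H), x ∈ Vs → ContinuousLinearMap.adjoint (S.Sv u) x ∈ Vs)
    (hcoE : ∀ (e : G.E) (x : H), x ∈ Vs → ContinuousLinearMap.adjoint (S.Se e) x ∈ Vs) :
    ∀ (w : G.V) (μ : List G.E), G.IsPathAt w μ →
      ∀ x ∈ genSubspace S Vs,
        pathOp S w μ x ∈ genSubspace S Vs ∧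
        ContinuousLinearMap.adjoint (pathOp S w μ) x ∈ genSubspace S Vs :=
  fun _ _ hμ _ hx =>
    ⟨mapsTo_genSubspace_pathOp hcoV hμ hx, mapsTo_genSubspace_adjoint_pathOp hcoV hcoE hμ hx⟩
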